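/- Bounded-model characterization of validity (decidability of LCR): an L≻-formula φ is valid in all Kripke LCR models if and only if φ is valid in all Kripke LCR models having at most m^n worlds, where n is the number of subformulas of φ. -/
import Mathlib


namespace LCR

/-- Łukasiewicz negation on ℝ. -/
noncomputable def lneg (a : ℝ) : ℝ := 1 - a

/-- Łukasiewicz implication on ℝ. -/
noncomputable def limp (a b : ℝ) : ℝ := min 1 (1 - a + b)

/-- Łukasiewicz strong conjunction ⊙ on ℝ. -/
noncomputable def lodot (a b : ℝ) : ℝ := max 0 (a + b - 1)

/-- The truth-value set T = {0, 1/(m−1), …, 1}. -/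
def Tset (m : ℕ) : Set ℝ := {a | ∃ i : Fin m, a = (i : ℝ) / ((m : ℝ) - 1)}

/-- The k-th truth value k/(m−1). -/
noncomputable def tv (m : ℕ) (k : Fin m) : ℝ := (k : ℝ) / ((m : ℝ) - 1)

/-- Formulas of the language L≻. -/
inductive Formula : Type where
  | var  : ℕ → Formula
  | neg  : Formula → Formula
  | imp  : Formula → Formula → Formula
  | cond : Formula → Formula → Formula
deriving DecidableEq

namespace Formula
/-- φ ∨ ψ := (φ → ψ) → ψ. -/
def or (φ ψ : Formula) : Formula := .imp (.imp φ ψ) ψ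
/-- φ ∧ ψ := ¬(¬φ ∨ ¬ψ). -/
def and (φ ψ : Formula) : Formula := .neg (Formula.or (.neg φ) (.neg ψ))
/-- φ ↔ ψ := (φ → ψ) ∧ (ψ → φ). -/
def iff (φ ψ : Formula) : Formula := Formula.and (.imp φ ψ) (.imp ψ φ)
end Formula

/-- Purely propositional (¬,→)-formulas. -/
inductive PForm : Type where
  | var : ℕ → PForm
  | neg : PForm → PForm
  | imp : PForm → PForm → PForm

/-- Evaluation of a propositional formula under an assignment. -/
noncomputable def PForm.eval (σ : ℕ → ℝ) : PForm → ℝ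
  | .var n => σ n
  | .neg φ => lneg (PForm.eval σ φ)
  | .imp φ ψ => limp (PForm.eval σ φ) (PForm.eval σ ψ)

/-- Tautology of Łukasiewicz m-valued propositional logic. -/
def PForm.Taut (m : ℕ) (φ : PForm) : Prop :=
  ∀ σ : ℕ → ℝ, (∀ n, σ n ∈ Tset m) → PForm.eval σ φ = 1

/-- Substitution of L≻-formulas for the variables of a propositional formula. -/
def PForm.subst (σ : ℕ → Formula) : PForm → Formula
  | .var n => σ n
  | .neg φ => .neg (PForm.subst σ φ)
  | .imp φ ψ => .imp (PForm.subst σ φ) (PForm.subst σ ψ)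

/-- `J` is a family of Rosser–Turquette J-operators: each `J a` is obtained by substitution
into a (¬,→)-definable one-place connective whose value is 1 at inputs equal to `tv m a`
and 0 at all other truth values. -/
def IsJFamily (m : ℕ) (J : Fin m → Formula → Formula) : Prop :=
  ∃ P : Fin m → PForm,
    (∀ a φ, J a φ = PForm.subst (fun _ => φ) (P a)) ∧
    (∀ (a : Fin m) (σ : ℕ → ℝ), (∀ n, σ n ∈ Tset m) →
      PForm.eval σ (P a) = if σ 0 = tv m a then 1 else 0)

/-- `I` is a family of threshold operators: each `I a` is obtained by substitution into a
(¬,→)-definable one-place connective whose value is 1 at inputs ≥ `tv m a` and 0 otherwise. -/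
def IsIFamily (m : ℕ) (I : Fin m → Formula → Formula) : Prop :=
  ∃ P : Fin m → PForm,
    (∀ a φ, I a φ = PForm.subst (fun _ => φ) (P a)) ∧
    (∀ (a : Fin m) (σ : ℕ → ℝ), (∀ n, σ n ∈ Tset m) →
      PForm.eval σ (P a) = if tv m a ≤ σ 0 then 1 else 0)

/-- The index of aᵢ = (m−i)/(m−1) for i = j+1, i.e. m−1−j. -/
def revIdx {m : ℕ} (j : Fin m) : Fin m := ⟨m - 1 - j.1, by have := j.isLt; omega⟩

/-- Index-level strong conjunction: tv (odotIdx a b) = tv a ⊙ tv b. -/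
def odotIdx {m : ℕ} (a b : Fin m) : Fin m :=
  ⟨a.1 + b.1 - (m - 1), by have := a.isLt; have := b.isLt; omega⟩

/-- Nested implication →ⁿᵢ₌₁(φᵢ, ψ) = φₙ → (φₙ₋₁ → (⋯ → (φ₁ → ψ))), with φᵢ = f (i−1). -/
def nestImp : (n : ℕ) → (Fin n → Formula) → Formula → Formula
  | 0, _, ψ => ψ
  | n+1, f, ψ => .imp (f (Fin.last n)) (nestImp n (fun i => f i.castSucc) ψ)

/-- Theorems of the system LCR (relative to the I-operators used in the rules R_a). -/
inductive Thm (m : ℕ) (I : Fin m → Formula → Formula) : Formula → Prop where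
  | taut : ∀ (ψ : PForm) (σ : ℕ → Formula), PForm.Taut m ψ → Thm m I (PForm.subst σ ψ)
  | a1 : ∀ φ ψ θ : Formula,
      Thm m I (.imp (.cond φ (ψ.and θ)) ((Formula.cond φ ψ).and (.cond φ θ)))
  | a2 : ∀ φ ψ θ : Formula,
      Thm m I (.imp ((Formula.cond φ ψ).and (.cond φ θ)) (.cond φ (ψ.and θ)))
  | a3 : ∀ (φ : Formula) (p : ℕ), Thm m I (.cond φ (.imp (.var p) (.var p)))
  | mp : ∀ φ ψ : Formula, Thm m I (.imp φ ψ) → Thm m I φ → Thm m I ψ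
  | rcea : ∀ φ ψ θ : Formula,
      Thm m I (φ.iff ψ) → Thm m I ((Formula.cond φ θ).iff (.cond ψ θ))
  | rcec : ∀ φ ψ θ : Formula,
      Thm m I (φ.iff ψ) → Thm m I ((Formula.cond θ φ).iff (.cond θ ψ))
  | ra : ∀ (a : Fin m) (φ : Formula) (γ : Fin m → Formula) (δ : Formula),
      (∀ b : Fin m,
        Thm m I (nestImp m (fun j => I (odotIdx (revIdx j) b) (γ j)) (I (odotIdx a b) δ))) →
      Thm m I (nestImp m (fun j => I (revIdx j) (.cond φ (γ j))) (I a (.cond φ δ)))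

/-- Γ ⊢_LCR φ : derivability from Γ by theorems of LCR and modus ponens. -/
inductive Deriv (m : ℕ) (I : Fin m → Formula → Formula) (Γ : Set Formula) : Formula → Prop where
  | thm : ∀ φ, Thm m I φ → Deriv m I Γ φ
  | mem : ∀ φ, φ ∈ Γ → Deriv m I Γ φ
  | mp : ∀ φ ψ, Deriv m I Γ (.imp φ ψ) → Deriv m I Γ φ → Deriv m I Γ ψ

/-- A Kripke LCR model over a set of worlds W. -/
structure Model (m : ℕ) (W : Type) : Type where
  ne : Nonempty W
  R : (Fin m → Set W) → W → W → ℝ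
  R_mem : ∀ X x y, R X x y ∈ Tset m
  v : ℕ → W → ℝ
  v_mem : ∀ p x, v p x ∈ Tset m

/-- Valuation of formulas in a Kripke LCR model. -/
noncomputable def Model.val {m : ℕ} {W : Type} (M : Model m W) : Formula → W → ℝ
  | .var p, x => M.v p x
  | .neg φ, x => lneg (M.val φ x)
  | .imp φ ψ, x => limp (M.val φ x) (M.val ψ x)
  | .cond φ ψ, x =>
      sInf (Set.range fun y : W =>
        limp (M.R (fun i => {z : W | M.val φ z = tv m i}) x y) (M.val ψ y))

/-- Semantic consequence Γ ⊨ φ over all Kripke LCR models. -/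
def Entails (m : ℕ) (Γ : Set Formula) (φ : Formula) : Prop :=
  ∀ (W : Type) (M : Model m W) (x : W), (∀ ψ ∈ Γ, M.val ψ x = 1) → M.val φ x = 1

/-- Syntactic consistency. -/
def Consistent (m : ℕ) (I : Fin m → Formula → Formula) (Γ : Set Formula) : Prop :=
  ¬ ∃ φ : Formula, Deriv m I Γ φ ∧ Deriv m I Γ (.neg φ)

/-- Maximal consistency. -/
def MaxConsistent (m : ℕ) (I : Fin m → Formula → Formula) (Γ : Set Formula) : Prop :=
  Consistent m I Γ ∧ ∀ φ : Formula, Deriv m I Γ φ → φ ∈ Γ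


/-- The finite set of subformulas of a formula. -/
def Formula.subformulas : Formula → Finset Formula
  | .var p => {Formula.var p}
  | .neg φ => insert (Formula.neg φ) (Formula.subformulas φ)
  | .imp φ ψ => insert (Formula.imp φ ψ) (Formula.subformulas φ ∪ Formula.subformulas ψ)
  | .cond φ ψ => insert (Formula.cond φ ψ) (Formula.subformulas φ ∪ Formula.subformulas ψ)


section Bounded

variable {m : ℕ}

lemma Tset_eq_range (m : ℕ) : Tset m = Set.range (tv m) := by
  ext a; simp [Tset, tv, eq_comm]

lemma Tset_finite (m : ℕ) : (Tset m).Finite := by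
  rw [Tset_eq_range]; exact Set.finite_range _

lemma csInf_mem_of_subset_Tset {s : Set ℝ} (hne : s.Nonempty) (hs : s ⊆ Tset m) :
    sInf s ∈ s := hne.csInf_mem ((Tset_finite m).subset hs)

lemma csSup_mem_of_subset_Tset {s : Set ℝ} (hne : s.Nonempty) (hs : s ⊆ Tset m) :
    sSup s ∈ s := hne.csSup_mem ((Tset_finite m).subset hs)

lemma bddBelow_of_subset_Tset {s : Set ℝ} (hs : s ⊆ Tset m) : BddBelow s :=
  ((Tset_finite m).subset hs).bddBelow

lemma bddAbove_of_subset_Tset {s : Set ℝ} (hs : s ⊆ Tset m) : BddAbove s :=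
  ((Tset_finite m).subset hs).bddAbove

lemma lneg_mem (hm : 2 ≤ m) {a : ℝ} (ha : a ∈ Tset m) : lneg a ∈ Tset m := by
  obtain ⟨i, rfl⟩ := ha
  have h2 : (2:ℝ) ≤ (m:ℝ) := by exact_mod_cast hm
  have hne : ((m:ℝ) - 1) ≠ 0 := by linarith
  refine ⟨⟨m - 1 - i.1, by omega⟩, ?_⟩
  have hcast : (((m - 1 - i.1 : ℕ)) : ℝ) = (m:ℝ) - 1 - i.1 := by
    have : i.1 ≤ m - 1 := by omega
    push_cast [Nat.cast_sub this, Nat.cast_sub (by omega : 1 ≤ m)]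
    ring
  simp only [lneg, hcast]
  field_simp

lemma limp_mem (hm : 2 ≤ m) {a b : ℝ} (ha : a ∈ Tset m) (hb : b ∈ Tset m) :
    limp a b ∈ Tset m := by
  obtain ⟨i, rfl⟩ := ha
  obtain ⟨j, rfl⟩ := hb
  have h2 : (2:ℝ) ≤ (m:ℝ) := by exact_mod_cast hm
  have hpos : (0:ℝ) < (m:ℝ) - 1 := by linarith
  rcases le_or_gt i.1 j.1 with hij | hij
  · refine ⟨⟨m - 1, by omega⟩, ?_⟩
    have hij' : (i.1:ℝ) ≤ (j.1:ℝ) := by exact_mod_cast hij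
    have h1 : (i.1:ℝ)/((m:ℝ)-1) ≤ (j.1:ℝ)/((m:ℝ)-1) := by gcongr
    have hcast : (((m - 1 : ℕ)) : ℝ) = (m:ℝ) - 1 := by
      push_cast [Nat.cast_sub (by omega : 1 ≤ m)]; ring
    simp only [limp]
    rw [min_eq_left (by linarith)]
    show (1:ℝ) = ((m - 1 : ℕ) : ℝ) / ((m:ℝ) - 1)
    rw [hcast, div_self hpos.ne']
  · refine ⟨⟨m - 1 - i.1 + j.1, by omega⟩, ?_⟩
    have hij' : (j.1:ℝ) ≤ (i.1:ℝ) := by exact_mod_cast hij.le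
    have h1 : (j.1:ℝ)/((m:ℝ)-1) ≤ (i.1:ℝ)/((m:ℝ)-1) := by gcongr
    have hcast : (((m - 1 - i.1 + j.1 : ℕ)) : ℝ) = (m:ℝ) - 1 - i.1 + j.1 := by
      have hi1 : i.1 ≤ m - 1 := by omega
      push_cast [Nat.cast_sub hi1, Nat.cast_sub (by omega : 1 ≤ m)]
      ring
    simp only [limp]
    rw [min_eq_right (by linarith)]
    show (1:ℝ) - (i.1:ℝ)/((m:ℝ)-1) + (j.1:ℝ)/((m:ℝ)-1)
        = ((m - 1 - i.1 + j.1 : ℕ) : ℝ) / ((m:ℝ) - 1)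
    rw [hcast]
    field_simp

lemma Model.val_mem (hm : 2 ≤ m) {W : Type} (M : Model m W) :
    ∀ (ψ : Formula) (x : W), M.val ψ x ∈ Tset m := by
  intro ψ
  induction ψ with
  | var p => intro x; exact M.v_mem p x
  | neg ψ ih => intro x; exact lneg_mem hm (ih x)
  | imp ψ χ ih1 ih2 => intro x; exact limp_mem hm (ih1 x) (ih2 x)
  | cond ψ χ ih1 ih2 =>
    intro x
    haveI : Nonempty W := M.ne
    show sInf _ ∈ Tset m
    have hsub : Set.range (fun y => limp (M.R (fun i => {z : W | M.val ψ z = tv m i}) x y)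
        (M.val χ y)) ⊆ Tset m := by
      rintro _ ⟨y, rfl⟩; exact limp_mem hm (M.R_mem _ x y) (ih2 y)
    exact hsub (csInf_mem_of_subset_Tset (Set.range_nonempty _) hsub)

lemma Formula.mem_subformulas_self (φ : Formula) : φ ∈ φ.subformulas := by
  cases φ <;> simp [Formula.subformulas]

lemma Formula.subformulas_trans : ∀ {φ ψ : Formula},
    ψ ∈ φ.subformulas → ψ.subformulas ⊆ φ.subformulas := by
  intro φ
  induction φ with
  | var p =>
    intro ψ h
    simp [Formula.subformulas] at h
    subst h; exact fun _ h => h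
  | neg φ ih =>
    intro ψ h
    simp only [Formula.subformulas, Finset.mem_insert] at h
    rcases h with rfl | h
    · exact fun _ h => h
    · exact (ih h).trans (Finset.subset_insert _ _)
  | imp φ χ ih1 ih2 =>
    intro ψ h
    simp only [Formula.subformulas, Finset.mem_insert, Finset.mem_union] at h
    rcases h with rfl | h | h
    · exact fun _ h => h
    · exact (ih1 h).trans ((Finset.subset_union_left).trans (Finset.subset_insert _ _))
    · exact (ih2 h).trans ((Finset.subset_union_right).trans (Finset.subset_insert _ _))
  | cond φ χ ih1 ih2 =>
    intro ψ h
    simp only [Formula.subformulas, Finset.mem_insert, Finset.mem_union] at h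
    rcases h with rfl | h | h
    · exact fun _ h => h
    · exact (ih1 h).trans ((Finset.subset_union_left).trans (Finset.subset_insert _ _))
    · exact (ih2 h).trans ((Finset.subset_union_right).trans (Finset.subset_insert _ _))

/-- The filtration setoid: identify worlds agreeing on all subformulas of φ. -/
def fSetoid {W : Type} (m : ℕ) (M : Model m W) (φ : Formula) : Setoid W :=
  ⟨fun y z => ∀ ψ ∈ φ.subformulas, M.val ψ y = M.val ψ z,
   ⟨fun _ _ _ => rfl, fun h ψ hψ => (h ψ hψ).symm, fun h1 h2 ψ hψ => (h1 ψ hψ).trans (h2 ψ hψ)⟩⟩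

/-- The filtrated (quotient) model. -/
noncomputable def QModel {W : Type} (m : ℕ) (M : Model m W) (φ : Formula) :
    Model m (Quotient (fSetoid m M φ)) where
  ne := ⟨Quotient.mk _ (Classical.choice M.ne)⟩
  R := fun X c d => sSup (Set.range fun z : {z : W // Quotient.mk (fSetoid m M φ) z = d} =>
        M.R (fun i => {w : W | Quotient.mk (fSetoid m M φ) w ∈ X i}) c.out z.1)
  R_mem := by
    intro X c d
    haveI : Nonempty {z : W // Quotient.mk (fSetoid m M φ) z = d} := ⟨⟨d.out, d.out_eq⟩⟩
    have hsub : Set.range (fun z : {z : W // Quotient.mk (fSetoid m M φ) z = d} =>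
        M.R (fun i => {w : W | Quotient.mk (fSetoid m M φ) w ∈ X i}) c.out z.1) ⊆ Tset m := by
      rintro _ ⟨z, rfl⟩; exact M.R_mem _ _ _
    exact hsub (csSup_mem_of_subset_Tset (Set.range_nonempty _) hsub)
  v := fun p d => M.v p d.out
  v_mem := fun p d => M.v_mem p d.out

lemma limp_antitone_left {a a' b : ℝ} (h : a' ≤ a) : limp a b ≤ limp a' b := by
  simp only [limp]; exact min_le_min le_rfl (by linarith)

lemma limp_csSup {S : Set ℝ} (hne : S.Nonempty) (hS : S ⊆ Tset m) (b : ℝ) :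
    limp (sSup S) b = sInf ((fun a => limp a b) '' S) := by
  have hmem := csSup_mem_of_subset_Tset hne hS
  apply le_antisymm
  · apply le_csInf (hne.image (fun a => limp a b))
    rintro _ ⟨a, ha, rfl⟩
    exact limp_antitone_left (le_csSup (bddAbove_of_subset_Tset hS) ha)
  · exact csInf_le ((((Tset_finite m).subset hS).image (fun a => limp a b)).bddBelow)
      ⟨sSup S, hmem, rfl⟩

lemma sInf_quotient_classes {W : Type} [Nonempty W] (s : Setoid W) (g : W → ℝ)
    (hg : ∀ z, g z ∈ Tset m) :
    sInf (Set.range fun d : Quotient s =>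
      sInf (Set.range fun z : {z : W // Quotient.mk s z = d} => g z.1)) = sInf (Set.range g) := by
  have hr : Set.range g ⊆ Tset m := by rintro _ ⟨z, rfl⟩; exact hg z
  have hbdd : BddBelow (Set.range g) := bddBelow_of_subset_Tset hr
  have hinner : ∀ d : Quotient s,
      (Set.range fun z : {z : W // Quotient.mk s z = d} => g z.1) ⊆ Set.range g := by
    rintro d _ ⟨z, rfl⟩; exact ⟨z.1, rfl⟩
  have hinne : ∀ d : Quotient s, Nonempty {z : W // Quotient.mk s z = d} :=
    fun d => ⟨⟨d.out, d.out_eq⟩⟩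
  haveI : Nonempty (Quotient s) := ⟨Quotient.mk s (Classical.arbitrary W)⟩
  apply le_antisymm
  · apply le_csInf (Set.range_nonempty g)
    rintro _ ⟨z, rfl⟩
    haveI := hinne (Quotient.mk s z)
    have houter : (Set.range fun d : Quotient s =>
        sInf (Set.range fun z : {z : W // Quotient.mk s z = d} => g z.1)) ⊆ Tset m := by
      rintro _ ⟨d, rfl⟩
      haveI := hinne d
      exact hr (hinner d (csInf_mem_of_subset_Tset (Set.range_nonempty _)
        ((hinner d).trans hr)))
    calc sInf (Set.range fun d : Quotient s =>
          sInf (Set.range fun z : {z : W // Quotient.mk s z = d} => g z.1))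
        ≤ sInf (Set.range fun w : {w : W // Quotient.mk s w = Quotient.mk s z} => g w.1) :=
          csInf_le (bddBelow_of_subset_Tset houter) ⟨Quotient.mk s z, rfl⟩
      _ ≤ g z := csInf_le (bddBelow_of_subset_Tset ((hinner _).trans hr)) ⟨⟨z, rfl⟩, rfl⟩
  · apply le_csInf (Set.range_nonempty _)
    rintro _ ⟨d, rfl⟩
    haveI := hinne d
    apply le_csInf (Set.range_nonempty _)
    rintro _ ⟨z, rfl⟩
    exact csInf_le hbdd ⟨z.1, rfl⟩

lemma QModel_val {W : Type} {m : ℕ} (hm : 2 ≤ m) (M : Model m W) (φ : Formula) :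
    ∀ ψ ∈ φ.subformulas, ∀ y : W,
      (QModel m M φ).val ψ (Quotient.mk (fSetoid m M φ) y) = M.val ψ y := by
  haveI : Nonempty W := M.ne
  intro ψ
  induction ψ with
  | var p =>
    intro hψ y
    show M.v p (Quotient.mk (fSetoid m M φ) y).out = M.v p y
    have hrel : ∀ χ ∈ φ.subformulas,
        M.val χ (Quotient.mk (fSetoid m M φ) y).out = M.val χ y :=
      Quotient.exact ((Quotient.mk (fSetoid m M φ) y).out_eq)
    exact hrel (.var p) hψ
  | neg ψ ih =>
    intro hψ y
    have hsub : ψ ∈ φ.subformulas :=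
      Formula.subformulas_trans hψ (by simp [Formula.subformulas, Formula.mem_subformulas_self])
    show lneg _ = lneg _
    rw [ih hsub y]
  | imp ψ χ ih1 ih2 =>
    intro hψ y
    have hs1 : ψ ∈ φ.subformulas :=
      Formula.subformulas_trans hψ (by simp [Formula.subformulas, Formula.mem_subformulas_self])
    have hs2 : χ ∈ φ.subformulas :=
      Formula.subformulas_trans hψ (by simp [Formula.subformulas, Formula.mem_subformulas_self])
    show limp _ _ = limp _ _
    rw [ih1 hs1 y, ih2 hs2 y]
  | cond χ ψ₀ ih1 ih2 =>
    intro hψ y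
    have hs1 : χ ∈ φ.subformulas :=
      Formula.subformulas_trans hψ (by simp [Formula.subformulas, Formula.mem_subformulas_self])
    have hs2 : ψ₀ ∈ φ.subformulas :=
      Formula.subformulas_trans hψ (by simp [Formula.subformulas, Formula.mem_subformulas_self])
    set s := fSetoid m M φ with hs
    set x₀ := (Quotient.mk s y).out with hx₀
    have hrel : ∀ χ' ∈ φ.subformulas, M.val χ' x₀ = M.val χ' y :=
      Quotient.exact ((Quotient.mk s y).out_eq)
    -- pull-back of the quotient-level antecedent tuple is the base-level one
    have hpull : (fun i => {w : W | Quotient.mk s w ∈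
        {d : Quotient s | (QModel m M φ).val χ d = tv m i}}) =
        (fun i => {w : W | M.val χ w = tv m i}) := by
      funext i; ext w
      simp only [Set.mem_setOf_eq]
      rw [ih1 hs1 w]
    have key : ∀ d : Quotient s,
        limp ((QModel m M φ).R (fun i => {d : Quotient s | (QModel m M φ).val χ d = tv m i})
            (Quotient.mk s y) d) ((QModel m M φ).val ψ₀ d)
          = sInf (Set.range fun z : {z : W // Quotient.mk s z = d} =>
              limp (M.R (fun i => {w : W | M.val χ w = tv m i}) x₀ z.1) (M.val ψ₀ z.1)) := by
      intro d
      haveI : Nonempty {z : W // Quotient.mk s z = d} := ⟨⟨d.out, d.out_eq⟩⟩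
      have hval : ∀ z : {z : W // Quotient.mk s z = d},
          M.val ψ₀ z.1 = (QModel m M φ).val ψ₀ d := by
        intro z
        exact (ih2 hs2 z.1).symm.trans (congrArg _ z.2)
      have hfun : (fun z : {z : W // Quotient.mk s z = d} =>
          limp (M.R (fun i => {w : W | M.val χ w = tv m i}) x₀ z.1) (M.val ψ₀ z.1)) =
          (fun z : {z : W // Quotient.mk s z = d} =>
          limp (M.R (fun i => {w : W | M.val χ w = tv m i}) x₀ z.1)
            ((QModel m M φ).val ψ₀ d)) := by
        funext z; exact congrArg _ (hval z)
      rw [hfun]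
      show limp (sSup _) _ = _
      rw [hpull]
      have hS : (Set.range fun z : {z : W // Quotient.mk s z = d} =>
          M.R (fun i => {w : W | M.val χ w = tv m i}) x₀ z.1) ⊆ Tset m := by
        rintro _ ⟨z, rfl⟩; exact M.R_mem _ _ _
      rw [limp_csSup (Set.range_nonempty _) hS, ← Set.range_comp]
      rfl
    show sInf _ = _
    have hrange : (Set.range fun d : Quotient s =>
        limp ((QModel m M φ).R (fun i => {d : Quotient s | (QModel m M φ).val χ d = tv m i})
            (Quotient.mk s y) d) ((QModel m M φ).val ψ₀ d)) =
        (Set.range fun d : Quotient s =>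
          sInf (Set.range fun z : {z : W // Quotient.mk s z = d} =>
            limp (M.R (fun i => {w : W | M.val χ w = tv m i}) x₀ z.1) (M.val ψ₀ z.1))) :=
      congrArg Set.range (funext key)
    rw [hrange]
    have h2 : sInf (Set.range fun d : Quotient s =>
        sInf (Set.range fun z : {z : W // Quotient.mk s z = d} =>
          limp (M.R (fun i => {w : W | M.val χ w = tv m i}) x₀ z.1) (M.val ψ₀ z.1)))
        = sInf (Set.range fun w : W =>
          limp (M.R (fun i => {w : W | M.val χ w = tv m i}) x₀ w) (M.val ψ₀ w)) :=
      sInf_quotient_classes (m := m) s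
        (fun w : W => limp (M.R (fun i => {w : W | M.val χ w = tv m i}) x₀ w) (M.val ψ₀ w))
        (fun z => limp_mem hm (M.R_mem _ _ _) (Model.val_mem hm M ψ₀ z))
    rw [h2, ← hrel (.cond χ ψ₀) hψ]
    rfl

lemma QModel_finite {W : Type} (m : ℕ) (hm : 2 ≤ m) (M : Model m W) (φ : Formula) :
    ∃ f : Quotient (fSetoid m M φ) → ({ψ : Formula // ψ ∈ φ.subformulas} → Fin m),
      Function.Injective f := by
  refine ⟨fun d ψ => (Model.val_mem hm M ψ.1 d.out).choose, ?_⟩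
  intro d d' h
  have hval : ∀ ψ : {ψ : Formula // ψ ∈ φ.subformulas},
      M.val ψ.1 d.out = M.val ψ.1 d'.out := by
    intro ψ
    have h1 := (Model.val_mem hm M ψ.1 d.out).choose_spec
    have h2 := (Model.val_mem hm M ψ.1 d'.out).choose_spec
    rw [h1, h2]
    exact congrArg (fun k : Fin m => ((k : ℕ) : ℝ) / ((m:ℝ) - 1)) (congrFun h ψ)
  have : (fSetoid m M φ).r d.out d'.out := fun ψ hψ => hval ⟨ψ, hψ⟩
  calc d = Quotient.mk _ d.out := d.out_eq.symm
    _ = Quotient.mk _ d'.out := Quotient.sound this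
    _ = d' := d'.out_eq

end Bounded

/-- φ is valid in all Kripke LCR models iff it is valid in all Kripke LCR
models with at most m^n worlds, where n is the number of subformulas of φ. -/
theorem valid_iff_valid_in_bounded_models (m : ℕ) (hm : 2 ≤ m) (φ : Formula) :
    (∀ (W : Type) (M : Model m W) (x : W), M.val φ x = 1) ↔
    (∀ (W : Type), Finite W → Nat.card W ≤ m ^ (Formula.subformulas φ).card →
      ∀ (M : Model m W) (x : W), M.val φ x = 1) := by
  constructor
  · intro h W _ _ M x
    exact h W M x
  · intro h W M x
    haveI : Nonempty W := M.ne
    obtain ⟨f, hf⟩ := QModel_finite m hm M φ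
    haveI : Finite (Quotient (fSetoid m M φ)) := Finite.of_injective f hf
    have hcard : Nat.card (Quotient (fSetoid m M φ)) ≤ m ^ (Formula.subformulas φ).card := by
      have := Nat.card_le_card_of_injective f hf
      have hc : Nat.card ({ψ : Formula // ψ ∈ φ.subformulas} → Fin m)
          = m ^ (Formula.subformulas φ).card := by
        simp [Nat.card_eq_fintype_card, Fintype.card_fun, Fintype.card_coe]
      omega
    have hval := QModel_val hm M φ φ (Formula.mem_subformulas_self φ) x
    rw [← hval]
    exact h (Quotient (fSetoid m M φ)) inferInstance hcard (QModel m M φ) _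


end LCR
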